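/- arXiv:1010.0654 — 6 statements merged into one kernel-verified Lean document; each statement's English description precedes it below -/
import Mathlib

section
/- Let M₁, M₂, W be finite nonempty sets, F : M₁ × M₂ → W, and p, q, u, v, w positive natural numbers. If F is computable over the Y-network with bit budgets ((p+q)·u, (p+q)·v, (p+q)·w), then the (p+q)-fold product function F^{(p+q)} : M₁^{p+q} × M₂^{p+q} → W^{p+q} is computable over the parallel double-Y network with bit budgets (q(p+q)u, p(p+q)u, q(p+q)v, p(p+q)v, q(p+q)w, p(p+q)w). (These double-Y budgets have per-link ratio Ã/A = B̃/B = C̃/C = p/q = α, so this realizes the paper's Lemma 1: the double-Y network with ã = αa, b̃ = αb, c̃ = αc can simulate, via time-sharing, any code for the Y-network Y((1+α)a, (1+α)b, (1+α)c).) -/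
/-! Time-sharing: a link of `k * r` bits carries `k` independent `r`-bit messages, so a
Y-network code with budgets `(R₁, R₂, R₃)` run on `k` inputs in parallel is a code for
the `k`-fold product with budgets `(k R₁, k R₂, k R₃)`. Running `q` of the `p + q`
instances this way on the first Y-network and the other `p` on the second gives the
double-Y code. -/

/-- A function `F : M₁ × M₂ → W` is computable over the Y-network with bit
budgets `(R₁, R₂, R₃)`. -/
def YComputable {M₁ M₂ W : Type*} (F : M₁ × M₂ → W) (R₁ R₂ R₃ : ℕ) : Prop :=
  ∃ (g₁ : M₁ → Fin (2 ^ R₁)) (g₂ : M₂ → Fin (2 ^ R₂))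
    (φ : Fin (2 ^ R₁) × Fin (2 ^ R₂) → Fin (2 ^ R₃)) (Dec : Fin (2 ^ R₃) → W),
    ∀ m₁ m₂, Dec (φ (g₁ m₁, g₂ m₂)) = F (m₁, m₂)

/-- A function `F : M₁ × M₂ → W` is computable over the parallel double-Y
network with bit budgets `(A, A', B, B', C, C')`. -/
def DoubleYComputable {M₁ M₂ W : Type*} (F : M₁ × M₂ → W)
    (A A' B B' C C' : ℕ) : Prop :=
  ∃ (e₁ : M₁ → Fin (2 ^ A) × Fin (2 ^ A')) (e₂ : M₂ → Fin (2 ^ B) × Fin (2 ^ B'))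
    (φ₁ : Fin (2 ^ A) × Fin (2 ^ B) → Fin (2 ^ C))
    (φ₂ : Fin (2 ^ A') × Fin (2 ^ B') → Fin (2 ^ C'))
    (Dec : Fin (2 ^ C) × Fin (2 ^ C') → W),
    ∀ m₁ m₂, Dec (φ₁ ((e₁ m₁).1, (e₂ m₂).1), φ₂ ((e₁ m₁).2, (e₂ m₂).2)) = F (m₁, m₂)

/-- The `k`-fold product of `F`, acting componentwise. -/
def prodFun {M₁ M₂ W : Type*} (F : M₁ × M₂ → W) (k : ℕ) :
    (Fin k → M₁) × (Fin k → M₂) → (Fin k → W) :=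
  fun p i => F (p.1 i, p.2 i)

def finPowMulEquiv (k r : ℕ) : (Fin k → Fin (2 ^ r)) ≃ Fin (2 ^ (k * r)) :=
  finFunctionFinEquiv.trans (finCongr (by rw [← pow_mul, mul_comm]))

theorem YComputable.prodFun {M₁ M₂ W : Type*} {F : M₁ × M₂ → W} {r₁ r₂ r₃ : ℕ}
    (h : YComputable F r₁ r₂ r₃) (k : ℕ) :
    YComputable (prodFun F k) (k * r₁) (k * r₂) (k * r₃) := by
  obtain ⟨g₁, g₂, φ, dec, hdec⟩ := h
  refine ⟨fun m => finPowMulEquiv k r₁ (g₁ ∘ m), fun m => finPowMulEquiv k r₂ (g₂ ∘ m),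
    fun x => finPowMulEquiv k r₃ fun i =>
      φ ((finPowMulEquiv k r₁).symm x.1 i, (finPowMulEquiv k r₂).symm x.2 i),
    fun c i => dec ((finPowMulEquiv k r₃).symm c i), fun m₁ m₂ => ?_⟩
  funext i
  simp [_root_.prodFun, hdec]

/-- The first `m` coordinates travel over the second Y-network, the last `n` over the first. -/
theorem doubleYComputable_prodFun_add {M₁ M₂ W : Type*} {F : M₁ × M₂ → W}
    {m n A A' B B' C C' : ℕ}
    (h : YComputable (prodFun F n) A B C) (h' : YComputable (prodFun F m) A' B' C') :
    DoubleYComputable (prodFun F (m + n)) A A' B B' C C' := by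
  obtain ⟨g₁, g₂, φ, dec, hdec⟩ := h
  obtain ⟨g₁', g₂', φ', dec', hdec'⟩ := h'
  refine ⟨fun x => (g₁ (x ∘ Fin.natAdd m), g₁' (x ∘ Fin.castAdd n)),
    fun y => (g₂ (y ∘ Fin.natAdd m), g₂' (y ∘ Fin.castAdd n)), φ, φ',
    fun c => Fin.append (dec' c.2) (dec c.1), fun x y => ?_⟩
  funext i
  refine Fin.addCases (fun i => ?_) (fun i => ?_) i
  · simp [hdec', prodFun]
  · simp [hdec, prodFun]

theorem Y_le_doubleY_timesharing_general {M₁ M₂ W : Type*}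
    (F : M₁ × M₂ → W) (p q u v w : ℕ)
    (h : YComputable F ((p + q) * u) ((p + q) * v) ((p + q) * w)) :
    DoubleYComputable (prodFun F (p + q))
      (q * (p + q) * u) (p * (p + q) * u)
      (q * (p + q) * v) (p * (p + q) * v)
      (q * (p + q) * w) (p * (p + q) * w) := by
  have hfirst := h.prodFun q
  have hsecond := h.prodFun p
  simp only [← mul_assoc] at hfirst hsecond
  exact doubleYComputable_prodFun_add hfirst hsecond

/-- Time-sharing (the paper's Lemma 1): if `F` is computable over the Y-network
`Y((p+q)u, (p+q)v, (p+q)w)`, then the `(p+q)`-fold product of `F` is computable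
over the parallel double-Y network with budgets
`(q(p+q)u, p(p+q)u, q(p+q)v, p(p+q)v, q(p+q)w, p(p+q)w)`
(per-link ratio `p/q = α` on the second Y). -/
theorem Y_le_doubleY_timesharing {M₁ M₂ W : Type*} [Fintype M₁] [Nonempty M₁]
    [Fintype M₂] [Nonempty M₂] [Fintype W] [Nonempty W]
    (F : M₁ × M₂ → W) (p q u v w : ℕ)
    (hp : 0 < p) (hq : 0 < q) (hu : 0 < u) (hv : 0 < v) (hw : 0 < w)
    (h : YComputable F ((p + q) * u) ((p + q) * v) ((p + q) * w)) :
    DoubleYComputable (prodFun F (p + q))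
      (q * (p + q) * u) (p * (p + q) * u)
      (q * (p + q) * v) (p * (p + q) * v)
      (q * (p + q) * w) (p * (p + q) * w) :=
  Y_le_doubleY_timesharing_general F p q u v w h
end

section
/- Let A, B, B', C, D be positive natural numbers satisfying B'·A + B·C ≤ (B + B')·D, and set k = B + B'. Then for every finite nonempty sets M₁, M₂, W and every function F : M₁ × M₂ → W that is computable over the Y-network with bit budgets (A, B + B', C), the k-fold product function F^{(k)} : M₁^k × M₂^k → W^k is computable over the two-relay cascade network with bit budgets (kA, kB, kB', kD, kC). (This is the lower-bounding direction of the paper's Lemma 2: with β = b'/(b+b'), the condition βa + (1−β)c ≤ d — equivalently b'a + bc ≤ (b+b')d — makes the cascade network of Fig. 4 equivalent to the Y-network Y(a, b + b', c).) -/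
/-- A function `F : M₁ × M₂ → W` is computable over the two-relay cascade
network with bit budgets `(A, B, B', D, C)` (topology: `x₁ → r₁` with `A` bits,
`x₂ → r₁` with `B` bits, `x₂ → r₂` with `B'` bits, `r₁ → r₂` with `D` bits,
`r₂ → sink` with `C` bits). -/
def CascadeComputable {M₁ M₂ W : Type*} (F : M₁ × M₂ → W)
    (A B B' D C : ℕ) : Prop :=
  ∃ (ea : M₁ → Fin (2 ^ A)) (eb : M₂ → Fin (2 ^ B)) (eb' : M₂ → Fin (2 ^ B'))
    (t : Fin (2 ^ A) × Fin (2 ^ B) → Fin (2 ^ D))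
    (ψ : Fin (2 ^ B') × Fin (2 ^ D) → Fin (2 ^ C))
    (Dec : Fin (2 ^ C) → W),
    ∀ m₁ m₂, Dec (ψ (eb' m₂, t (ea m₁, eb m₂))) = F (m₁, m₂)

/-!
Split the `k = B + B'` instances into `B` and `B'`. For the first `B` instances `x₂` sends its
Y-network messages (`B + B'` bits each) to `r₁`, which evaluates `φ` and forwards the `B·C` output
bits. For the last `B'` instances `x₂` sends its messages directly to `r₂`, while `r₁` just
forwards the `B'·A` bits received from `x₁`, so that `r₂` can evaluate `φ` itself. The link
`r₁ → r₂` thus carries `B·C + B'·A ≤ (B + B')·D` bits.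
-/

theorem CascadeComputable.of_card_le {M₁ M₂ W α β β' δ γ : Type*}
    [Fintype α] [Fintype β] [Fintype β'] [Fintype δ] [Fintype γ]
    [Nonempty α] [Nonempty β] [Nonempty β'] [Nonempty δ] [Nonempty γ]
    {F : M₁ × M₂ → W} {A B B' D C : ℕ}
    (hα : Fintype.card α ≤ 2 ^ A) (hβ : Fintype.card β ≤ 2 ^ B)
    (hβ' : Fintype.card β' ≤ 2 ^ B') (hδ : Fintype.card δ ≤ 2 ^ D)
    (hγ : Fintype.card γ ≤ 2 ^ C)
    (ea : M₁ → α) (eb : M₂ → β) (eb' : M₂ → β') (t : α × β → δ) (ψ : β' × δ → γ)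
    (Dec : γ → W) (h : ∀ m₁ m₂, Dec (ψ (eb' m₂, t (ea m₁, eb m₂))) = F (m₁, m₂)) :
    CascadeComputable F A B B' D C := by
  obtain ⟨ια⟩ := Function.Embedding.nonempty_of_card_le (hα.trans_eq (Fintype.card_fin _).symm)
  obtain ⟨ιβ⟩ := Function.Embedding.nonempty_of_card_le (hβ.trans_eq (Fintype.card_fin _).symm)
  obtain ⟨ιβ'⟩ := Function.Embedding.nonempty_of_card_le (hβ'.trans_eq (Fintype.card_fin _).symm)
  obtain ⟨ιδ⟩ := Function.Embedding.nonempty_of_card_le (hδ.trans_eq (Fintype.card_fin _).symm)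
  obtain ⟨ιγ⟩ := Function.Embedding.nonempty_of_card_le (hγ.trans_eq (Fintype.card_fin _).symm)
  refine ⟨ια ∘ ea, ιβ ∘ eb, ιβ' ∘ eb',
    fun p => ιδ (t (Function.invFun ια p.1, Function.invFun ιβ p.2)),
    fun p => ιγ (ψ (Function.invFun ιβ' p.1, Function.invFun ιδ p.2)),
    Dec ∘ Function.invFun ιγ, fun m₁ m₂ => ?_⟩
  simp only [Function.comp_apply, Function.leftInverse_invFun ια.injective _,
    Function.leftInverse_invFun ιβ.injective _, Function.leftInverse_invFun ιβ'.injective _,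
    Function.leftInverse_invFun ιδ.injective _, Function.leftInverse_invFun ιγ.injective _, h]

theorem card_fin_fun_fin_two_pow_le {m n r : ℕ} (h : m * n ≤ r) :
    Fintype.card (Fin m → Fin (2 ^ n)) ≤ 2 ^ r := by
  rw [Fintype.card_fun, Fintype.card_fin, Fintype.card_fin, ← pow_mul]
  exact Nat.pow_le_pow_right two_pos ((mul_comm n m).trans_le h)

theorem Y_le_cascade_general {M₁ M₂ W : Type*}
    (A B B' C D : ℕ) (hcond : B' * A + B * C ≤ (B + B') * D)
    (F : M₁ × M₂ → W) (h : YComputable F A (B + B') C) :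
    CascadeComputable (prodFun F (B + B'))
      ((B + B') * A) ((B + B') * B) ((B + B') * B') ((B + B') * D)
      ((B + B') * C) := by
  obtain ⟨g₁, g₂, φ, Dec, hdec⟩ := h
  have hδ : Fintype.card ((Fin B → Fin (2 ^ C)) × (Fin B' → Fin (2 ^ A))) ≤
      2 ^ ((B + B') * D) :=
    calc _ ≤ 2 ^ (B * C) * 2 ^ (B' * A) := by
          rw [Fintype.card_prod]
          exact Nat.mul_le_mul (card_fin_fun_fin_two_pow_le le_rfl)
            (card_fin_fun_fin_two_pow_le le_rfl)
      _ ≤ 2 ^ ((B + B') * D) := by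
          rw [← pow_add]
          exact Nat.pow_le_pow_right two_pos (by linarith)
  refine CascadeComputable.of_card_le (card_fin_fun_fin_two_pow_le le_rfl)
    (card_fin_fun_fin_two_pow_le (mul_comm _ _).le)
    (card_fin_fun_fin_two_pow_le (mul_comm _ _).le)
    hδ (card_fin_fun_fin_two_pow_le le_rfl)
    (fun m₁ => g₁ ∘ m₁) (fun m₂ i => g₂ (m₂ (Fin.castAdd B' i)))
    (fun m₂ j => g₂ (m₂ (Fin.natAdd B j)))
    (fun p => (fun i => φ (p.1 (Fin.castAdd B' i), p.2 i), fun j => p.1 (Fin.natAdd B j)))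
    (fun p => Fin.append p.2.1 fun j => φ (p.2.2 j, p.1 j))
    (fun c i => Dec (c i)) fun m₁ m₂ => ?_
  funext i
  exact (congrArg (fun c => Dec (c i))
    (Fin.append_castAdd_natAdd (f := fun i => φ (g₁ (m₁ i), g₂ (m₂ i))))).trans (hdec _ _)

/-- The lower-bounding direction of the paper's Lemma 2: if
`B'·A + B·C ≤ (B + B')·D` (i.e. `βa + (1−β)c ≤ d` with `β = b'/(b+b')`), then
any `F` computable over the Y-network `Y(A, B + B', C)` has its
`(B + B')`-fold product computable over the two-relay cascade network with the
budgets scaled up by `k = B + B'`. -/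
theorem Y_le_cascade {M₁ M₂ W : Type*} [Fintype M₁] [Nonempty M₁]
    [Fintype M₂] [Nonempty M₂] [Fintype W] [Nonempty W]
    (A B B' C D : ℕ) (hA : 0 < A) (hB : 0 < B) (hB' : 0 < B') (hC : 0 < C)
    (hD : 0 < D) (hcond : B' * A + B * C ≤ (B + B') * D)
    (F : M₁ × M₂ → W) (h : YComputable F A (B + B') C) :
    CascadeComputable (prodFun F (B + B'))
      ((B + B') * A) ((B + B') * B) ((B + B') * B') ((B + B') * D)
      ((B + B') * C) :=
  Y_le_cascade_general A B B' C D hcond F h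
end

section
/- Let M₁, M₂, W be finite nonempty sets, F : M₁ × M₂ → W, k ≥ 1, and let A, C, B₀, …, B_k, D₁, …, D_k be natural numbers. If F is computable over the (k+1)-relay cascade network with bit budgets (A; B₀, …, B_k; D₁, …, D_k; C), then F is computable over the Y-network with bit budgets (A, B₀ + B₁ + ⋯ + B_k, C). (This is the upper-bounding direction of the paper's Lemma 3, obtained by merging all k+1 intermediate relay nodes of the network of Fig. 6 into one.) -/
/-- The bit width of the signal entering relay `r_n` along the relay chain:
`A` bits enter `r₀` (from source `x₁`), and `D_n` bits enter `r_n` for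
`n ≥ 1` (from relay `r_{n-1}`). -/
def chainState (A : ℕ) (D : ℕ → ℕ) : ℕ → ℕ
  | 0 => A
  | n + 1 => D (n + 1)

/-- Running the relay chain: relay `r_n` combines its incoming
`chainState A D n`-bit signal with the `B n`-bit signal from source `x₂`
(using the map `t n`) and forwards the result to `r_{n+1}`. -/
def chainRun (A : ℕ) (B D : ℕ → ℕ)
    (t : ∀ i : ℕ,
      Fin (2 ^ chainState A D i) × Fin (2 ^ B i) → Fin (2 ^ chainState A D (i + 1)))
    (x : Fin (2 ^ A)) (y : ∀ j : ℕ, Fin (2 ^ B j)) :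
    ∀ n : ℕ, Fin (2 ^ chainState A D n)
  | 0 => x
  | n + 1 => t n (chainRun A B D t x y n, y n)

/-- A function `F : M₁ × M₂ → W` is computable over the `(k+1)`-relay cascade
network with bit budgets `(A; B₀, …, B_k; D₁, …, D_k; C)` (topology:
`x₁ → r₀` with `A` bits; `x₂ → r_j` with `B j` bits for `j = 0, …, k`;
`r_{i-1} → r_i` with `D i` bits for `i = 1, …, k`; `r_k → sink` with `C`
bits). Only the values `B 0, …, B k` and `D 1, …, D k` are relevant. -/
def MultiCascadeComputable {M₁ M₂ W : Type*} (F : M₁ × M₂ → W)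
    (k A : ℕ) (B D : ℕ → ℕ) (C : ℕ) : Prop :=
  ∃ (ea : M₁ → Fin (2 ^ A)) (e : ∀ j : ℕ, M₂ → Fin (2 ^ B j))
    (t : ∀ i : ℕ,
      Fin (2 ^ chainState A D i) × Fin (2 ^ B i) → Fin (2 ^ chainState A D (i + 1)))
    (ψ : Fin (2 ^ chainState A D k) × Fin (2 ^ B k) → Fin (2 ^ C))
    (Dec : Fin (2 ^ C) → W),
    ∀ m₁ m₂,
      Dec (ψ (chainRun A B D t (ea m₁) (fun j => e j m₂) k, e k m₂)) = F (m₁, m₂)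

/-!
Merging the relays `r₀, …, r_k` into a single node turns the cascade into a Y-network: the
merged node receives the `A`-bit message of `x₁` together with all `k + 1` messages of `x₂`,
which fit into `B₀ + ⋯ + B_k` bits, and runs the whole relay chain internally.
-/

lemma chainRun_congr (A : ℕ) (B D : ℕ → ℕ)
    (t : ∀ i : ℕ,
      Fin (2 ^ chainState A D i) × Fin (2 ^ B i) → Fin (2 ^ chainState A D (i + 1)))
    (x : Fin (2 ^ A)) {y₁ y₂ : ∀ j : ℕ, Fin (2 ^ B j)} :
    ∀ n : ℕ, (∀ j < n, y₁ j = y₂ j) → chainRun A B D t x y₁ n = chainRun A B D t x y₂ n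
  | 0, _ => rfl
  | n + 1, h => by
    simp only [chainRun, chainRun_congr A B D t x n (fun j hj => h j (Nat.lt_succ_of_lt hj)),
      h n (Nat.lt_succ_self n)]

lemma YComputable.of_equiv {M₁ M₂ W β : Type*} {F : M₁ × M₂ → W} {R₁ R₂ R₃ : ℕ}
    (E : β ≃ Fin (2 ^ R₂)) (g₁ : M₁ → Fin (2 ^ R₁)) (g₂ : M₂ → β)
    (φ : Fin (2 ^ R₁) × β → Fin (2 ^ R₃)) (Dec : Fin (2 ^ R₃) → W)
    (hF : ∀ m₁ m₂, Dec (φ (g₁ m₁, g₂ m₂)) = F (m₁, m₂)) :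
    YComputable F R₁ R₂ R₃ :=
  ⟨g₁, E ∘ g₂, fun p => φ (p.1, E.symm p.2), Dec, by simpa using hF⟩

def piFinTwoPowEquiv (n : ℕ) (B : ℕ → ℕ) :
    (∀ j : Fin n, Fin (2 ^ B j)) ≃ Fin (2 ^ ∑ j ∈ Finset.range n, B j) :=
  finPiFinEquiv.trans <| finCongr <| by
    rw [Fin.prod_univ_eq_prod_range (fun j => 2 ^ B j), Finset.prod_pow_eq_pow_sum]

def Fin.extendDefault {n : ℕ} {α : ℕ → Type*} [∀ j, Inhabited (α j)] (y : ∀ j : Fin n, α j)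
    (j : ℕ) : α j :=
  if hj : j < n then y ⟨j, hj⟩ else default

lemma Fin.extendDefault_of_lt {n : ℕ} {α : ℕ → Type*} [∀ j, Inhabited (α j)]
    (y : ∀ j : Fin n, α j) {j : ℕ} (hj : j < n) : Fin.extendDefault y j = y ⟨j, hj⟩ :=
  dif_pos hj

theorem multiCascade_le_Y_general {M₁ M₂ W : Type*}
    (F : M₁ × M₂ → W) (k : ℕ) (A C : ℕ) (B D : ℕ → ℕ)
    (h : MultiCascadeComputable F k A B D C) :
    YComputable F A (∑ j ∈ Finset.range (k + 1), B j) C := by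
  obtain ⟨ea, e, t, ψ, Dec, hF⟩ := h
  refine .of_equiv (piFinTwoPowEquiv (k + 1) B) ea (fun m₂ j => e j m₂)
    (fun p =>
      let y : ∀ j, Fin (2 ^ B j) := Fin.extendDefault p.2
      ψ (chainRun A B D t p.1 y k, y k))
    Dec fun m₁ m₂ => ?_
  dsimp only
  rw [chainRun_congr A B D t (ea m₁) (y₂ := fun j => e j m₂) k
      fun j hj => Fin.extendDefault_of_lt _ (by omega),
    Fin.extendDefault_of_lt _ k.lt_succ_self]
  exact hF m₁ m₂

/-- The upper-bounding direction of the paper's Lemma 3: merging all `k+1`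
relay nodes of the cascade of Fig. 6 into one shows that computability over
the `(k+1)`-relay cascade implies computability over the Y-network
`Y(A, B₀ + ⋯ + B_k, C)`. -/
theorem multiCascade_le_Y {M₁ M₂ W : Type*} [Fintype M₁] [Nonempty M₁]
    [Fintype M₂] [Nonempty M₂] [Fintype W] [Nonempty W]
    (F : M₁ × M₂ → W) (k : ℕ) (hk : 1 ≤ k) (A C : ℕ) (B D : ℕ → ℕ)
    (h : MultiCascadeComputable F k A B D C) :
    YComputable F A (∑ j ∈ Finset.range (k + 1), B j) C :=
  multiCascade_le_Y_general F k A C B D h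
end

section
/- Let k ≥ 1 and let A, C, B₀, …, B_k, D₁, …, D_k be positive natural numbers, and set S = B₀ + B₁ + ⋯ + B_k. Suppose that for every i ∈ {1, …, k}: C·(B₀ + ⋯ + B_{i−1}) + A·(B_i + ⋯ + B_k) ≤ S·D_i. Then for every finite nonempty sets M₁, M₂, W and every function F : M₁ × M₂ → W that is computable over the Y-network with bit budgets (A, S, C), the S-fold product function F^{(S)} : M₁^S × M₂^S → W^S is computable over the (k+1)-relay cascade network with bit budgets (S·A; S·B₀, …, S·B_k; S·D₁, …, S·D_k; S·C). (This is the lower-bounding direction of the paper's Lemma 3: with α_j = b_j/b₀, a₁ = a/(Σα_j) and c₁ = c/(Σα_j), the conditions Σ_{j<i} α_j c₁ + Σ_{j≥i} α_j a₁ ≤ d_i make the network of Fig. 6 equivalent to the Y-network Y(a, Σb_i, c).) -/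
/-!
Split the `S` instances into blocks, block `j` of size `B j` being assigned to relay `r_j`.
Every instance is run through the Y-network code: `x₁` sends the `A`-bit codes of all instances to
`r₀`, source `x₂` sends relay `r_j` the `S`-bit codes of the instances of block `j`, and `r_j`
replaces, for those instances, the `A`-bit code of `x₁` by the `C`-bit output of the Y-relay.
Before relay `r_i` the blocks `0, …, i-1` carry `C` bits per instance and the others `A` bits,
which is exactly the left-hand side of the hypothesis on `D_i`. Only the number of distinct
messages on each link matters: a relay decodes its inputs into the state of all instances,
updates it, and re-encodes it.
-/

open Finset Function

def Transmissible {α X : Type*} (b : ℕ) (f : α → X) : Prop :=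
  ∃ d : Fin (2 ^ b) → X, Set.range f ⊆ Set.range d

namespace Transmissible

variable {α X : Type*}

theorem of_comp {b : ℕ} (g : Fin (2 ^ b) → X) (h : α → Fin (2 ^ b)) :
    Transmissible b (fun a => g (h a)) :=
  ⟨g, Set.range_comp_subset_range h g⟩

theorem mono {b b' : ℕ} {f : α → X} (hf : Transmissible b f) (hb : b ≤ b') :
    Transmissible b' f := by
  obtain ⟨d, hd⟩ := hf
  have hle : 2 ^ b ≤ 2 ^ b' := Nat.pow_le_pow_right two_pos hb
  refine ⟨fun y => d (invFun (Fin.castLE hle) y), hd.trans ?_⟩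
  rintro _ ⟨y, rfl⟩
  exact ⟨Fin.castLE hle y, congrArg d (leftInverse_invFun (Fin.castLE_injective hle) y)⟩

theorem pi {ι : Type*} [Fintype ι] {X : ι → Type*} {b : ι → ℕ} {f : α → ∀ i, X i}
    (hf : ∀ i, Transmissible (b i) (fun a => f a i)) : Transmissible (∑ i, b i) f := by
  classical
  choose d hd using hf
  let E : Fin (2 ^ ∑ i, b i) ≃ ∀ i, Fin (2 ^ b i) :=
    Fintype.equivOfCardEq (by simp [prod_pow_eq_pow_sum])
  refine ⟨fun y i => d i (E y i), ?_⟩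
  rintro _ ⟨a, rfl⟩
  choose y hy using fun i => hd i ⟨a, rfl⟩
  exact ⟨E.symm y, by simp [hy]⟩

theorem exists_decoders [Nonempty X] {p : ℕ → Prop} {b : ℕ → ℕ} {f : ℕ → α → X}
    (hf : ∀ n, p n → Transmissible (b n) (f n)) :
    ∃ d : ∀ n, Fin (2 ^ b n) → X, ∀ n, p n → Set.range (f n) ⊆ Set.range (d n) := by
  have : ∀ n, ∃ d : Fin (2 ^ b n) → X, p n → Set.range (f n) ⊆ Set.range d := by
    intro n
    by_cases hn : p n
    · exact (hf n hn).imp fun _ hd _ => hd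
    · exact ⟨fun _ => Classical.arbitrary X, fun h => absurd h hn⟩
  choose d hd using this
  exact ⟨d, hd⟩

end Transmissible

theorem MultiCascadeComputable.of_simulation {M₁ M₂ W X U : Type*} {F : M₁ × M₂ → W}
    {k A C : ℕ} {B D : ℕ → ℕ} (s : ℕ → M₁ → M₂ → X) (x₀ : M₁ → X) (u : ℕ → M₂ → U)
    (step : ℕ → X → U → X) (dec : X → W)
    (hs_zero : ∀ m₁ m₂, s 0 m₁ m₂ = x₀ m₁)
    (hs_succ : ∀ n ≤ k, ∀ m₁ m₂, s (n + 1) m₁ m₂ = step n (s n m₁ m₂) (u n m₂))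
    (hdec : ∀ m₁ m₂, dec (s (k + 1) m₁ m₂) = F (m₁, m₂))
    (hs : ∀ n ≤ k, Transmissible (chainState A D n) (fun m : M₁ × M₂ => s n m.1 m.2))
    (hu : ∀ j ≤ k, Transmissible (B j) (u j))
    (hsink : Transmissible C (fun m : M₁ × M₂ => s (k + 1) m.1 m.2)) :
    MultiCascadeComputable F k A B D C := by
  have : Nonempty X := let ⟨d, _⟩ := hs 0 k.zero_le; ⟨d 0⟩
  have : Nonempty U := let ⟨d, _⟩ := hu 0 k.zero_le; ⟨d 0⟩
  obtain ⟨d, hd⟩ := Transmissible.exists_decoders hs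
  obtain ⟨dU, hdU⟩ := Transmissible.exists_decoders hu
  obtain ⟨dC, hdC⟩ := hsink
  let ea : M₁ → Fin (2 ^ A) := fun m₁ => invFun (d 0) (x₀ m₁)
  let e : ∀ j, M₂ → Fin (2 ^ B j) := fun j m₂ => invFun (dU j) (u j m₂)
  let t : ∀ n, Fin (2 ^ chainState A D n) × Fin (2 ^ B n) → Fin (2 ^ chainState A D (n + 1)) :=
    fun n p => invFun (d (n + 1)) (step n (d n p.1) (dU n p.2))
  refine ⟨ea, e, t, fun p => invFun dC (step k (d k p.1) (dU k p.2)), fun z => dec (dC z),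
    fun m₁ m₂ => ?_⟩
  have hside : ∀ j ≤ k, dU j (e j m₂) = u j m₂ := fun j hj => invFun_eq (hdU j hj ⟨m₂, rfl⟩)
  have hrun : ∀ n ≤ k, d n (chainRun A B D t (ea m₁) (fun j => e j m₂) n) = s n m₁ m₂ := by
    intro n hn
    induction n with
    | zero =>
      have hx₀ : x₀ m₁ ∈ Set.range (d 0) := hs_zero m₁ m₂ ▸ hd 0 hn ⟨(m₁, m₂), rfl⟩
      exact (invFun_eq hx₀).trans (hs_zero m₁ m₂).symm
    | succ n ih =>
      simp only [chainRun, t, ih (by omega), hside n (by omega), ← hs_succ n (by omega)]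
      exact invFun_eq (hd (n + 1) hn ⟨(m₁, m₂), rfl⟩)
  simp only [hrun k le_rfl, hside k le_rfl, ← hs_succ k le_rfl]
  rw [invFun_eq (hdC ⟨(m₁, m₂), rfl⟩), hdec]

section BlockSimulation

variable {ι M₁ M₂ α β γ : Type*}

def relayUpdate (φ : α × β → γ) : α ⊕ γ → Option β → α ⊕ γ
  | .inl a, some b => .inr (φ (a, b))
  | x, _ => x

variable (r : ι → ℕ) (g₁ : M₁ → α) (g₂ : M₂ → β) (φ : α × β → γ)

def blockState (n : ℕ) (m₁ : ι → M₁) (m₂ : ι → M₂) : ι → α ⊕ γ :=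
  fun i => if r i < n then .inr (φ (g₁ (m₁ i), g₂ (m₂ i))) else .inl (g₁ (m₁ i))

def blockSideInfo (j : ℕ) (m₂ : ι → M₂) : ι → Option β :=
  fun i => if r i = j then some (g₂ (m₂ i)) else none

theorem blockState_zero (m₁ : ι → M₁) (m₂ : ι → M₂) :
    blockState r g₁ g₂ φ 0 m₁ m₂ = fun i => .inl (g₁ (m₁ i)) := by
  funext i
  simp [blockState]

theorem blockState_succ (n : ℕ) (m₁ : ι → M₁) (m₂ : ι → M₂) :
    blockState r g₁ g₂ φ (n + 1) m₁ m₂ =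
      fun i => relayUpdate φ (blockState r g₁ g₂ φ n m₁ m₂ i) (blockSideInfo r g₂ n m₂ i) := by
  funext i
  rcases lt_trichotomy (r i) n with h | h | h
  · simp [blockState, blockSideInfo, relayUpdate, h, h.ne, Nat.lt_succ_of_lt h]
  · simp [blockState, blockSideInfo, relayUpdate, h]
  · simp [blockState, blockSideInfo, relayUpdate, h.ne', Nat.not_lt.mpr h, Nat.not_lt.mpr h.le]

theorem blockState_of_forall_lt {n : ℕ} (h : ∀ i, r i < n) (m₁ : ι → M₁) (m₂ : ι → M₂) :
    blockState r g₁ g₂ φ n m₁ m₂ = fun i => .inr (φ (g₁ (m₁ i), g₂ (m₂ i))) := by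
  funext i
  simp [blockState, h]

end BlockSimulation

section BlockBits

variable {ι M₁ M₂ : Type*} [Fintype ι] {R₁ R₂ R₃ : ℕ} (r : ι → ℕ)
  (g₁ : M₁ → Fin (2 ^ R₁)) (g₂ : M₂ → Fin (2 ^ R₂)) (φ : Fin (2 ^ R₁) × Fin (2 ^ R₂) → Fin (2 ^ R₃))

theorem transmissible_blockState (n : ℕ) :
    Transmissible (∑ i, if r i < n then R₃ else R₁)
      (fun m : (ι → M₁) × (ι → M₂) => blockState r g₁ g₂ φ n m.1 m.2) := by
  refine Transmissible.pi fun i => ?_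
  unfold blockState
  split_ifs
  · exact Transmissible.of_comp Sum.inr
      fun m : (ι → M₁) × (ι → M₂) => φ (g₁ (m.1 i), g₂ (m.2 i))
  · exact Transmissible.of_comp Sum.inl fun m : (ι → M₁) × (ι → M₂) => g₁ (m.1 i)

theorem transmissible_blockSideInfo (j : ℕ) :
    Transmissible (∑ i, if r i = j then R₂ else 0) (blockSideInfo r g₂ j) := by
  refine Transmissible.pi fun i => ?_
  unfold blockSideInfo
  split_ifs
  · exact Transmissible.of_comp some fun m₂ : ι → M₂ => g₂ (m₂ i)
  · exact Transmissible.of_comp (fun _ => none) fun _ => 0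

end BlockBits

theorem YComputable.multiCascadeComputable_pi {ι M₁ M₂ W : Type*} [Fintype ι]
    {F : M₁ × M₂ → W} {A R C k A' C' : ℕ} {B' D' : ℕ → ℕ} (h : YComputable F A R C)
    (r : ι → ℕ) (hr : ∀ i, r i ≤ k)
    (hB : ∀ j ≤ k, ∑ i, (if r i = j then R else 0) ≤ B' j)
    (hD : ∀ n ≤ k, ∑ i, (if r i < n then C else A) ≤ chainState A' D' n)
    (hC : Fintype.card ι * C ≤ C') :
    MultiCascadeComputable (fun p : (ι → M₁) × (ι → M₂) => fun i => F (p.1 i, p.2 i))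
      k A' B' D' C' := by
  obtain ⟨g₁, g₂, φ, Dec, hY⟩ := h
  have hdone : ∀ i, r i < k + 1 := fun i => Nat.lt_succ_of_le (hr i)
  refine MultiCascadeComputable.of_simulation (blockState r g₁ g₂ φ) (fun m₁ i => .inl (g₁ (m₁ i)))
    (blockSideInfo r g₂) (fun _ x c i => relayUpdate φ (x i) (c i))
    -- at the sink every instance is `inr`, so the `0` is never decoded
    (fun x i => Dec ((x i).elim (fun _ => 0) id)) (blockState_zero r g₁ g₂ φ)
    (fun n _ => blockState_succ r g₁ g₂ φ n) (fun m₁ m₂ => ?_)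
    (fun n hn => (transmissible_blockState r g₁ g₂ φ n).mono (hD n hn))
    (fun j hj => (transmissible_blockSideInfo r g₂ j).mono (hB j hj))
    ((transmissible_blockState r g₁ g₂ φ (k + 1)).mono (by simpa [hdone] using hC))
  simp [blockState_of_forall_lt r g₁ g₂ φ hdone, hY]

theorem exists_fin_sum_index {α : Type*} (s : Finset α) (B : α → ℕ) :
    ∃ r : Fin (∑ j ∈ s, B j) → α, (∀ i, r i ∈ s) ∧
      ∀ f : α → ℕ, ∑ i, f (r i) = ∑ j ∈ s, B j * f j := by
  let e : (Σ j : s, Fin (B j)) ≃ Fin (∑ j ∈ s, B j) :=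
    Fintype.equivOfCardEq (by simp [sum_attach s B])
  refine ⟨fun i => (e.symm i).1, fun i => (e.symm i).1.2, fun f => ?_⟩
  rw [Equiv.sum_comp e.symm (fun p => f p.1), Fintype.sum_sigma, ← sum_coe_sort s]
  simp

theorem sum_range_mul_ite_lt (B : ℕ → ℕ) (A C : ℕ) {n m : ℕ} (h : n ≤ m) :
    ∑ j ∈ range m, B j * (if j < n then C else A) =
      C * ∑ j ∈ range n, B j + A * ∑ j ∈ Ico n m, B j := by
  rw [← sum_range_add_sum_Ico _ h, mul_sum, mul_sum]
  congr 1
  · exact sum_congr rfl fun j hj => by rw [if_pos (mem_range.mp hj), mul_comm]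
  · exact sum_congr rfl fun j hj => by rw [if_neg (mem_Ico.mp hj).1.not_gt, mul_comm]

theorem Y_le_multiCascade_general {M₁ M₂ W : Type*}
    (k : ℕ) (A C : ℕ) (B D : ℕ → ℕ)
    (hcond : ∀ i, 1 ≤ i → i ≤ k →
      C * (∑ j ∈ Finset.range i, B j) + A * (∑ j ∈ Finset.Icc i k, B j) ≤
        (∑ j ∈ Finset.range (k + 1), B j) * D i)
    (F : M₁ × M₂ → W)
    (h : YComputable F A (∑ j ∈ Finset.range (k + 1), B j) C) :
    MultiCascadeComputable (prodFun F (∑ j ∈ Finset.range (k + 1), B j))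
      k ((∑ j ∈ Finset.range (k + 1), B j) * A)
      (fun j => (∑ j ∈ Finset.range (k + 1), B j) * B j)
      (fun i => (∑ j ∈ Finset.range (k + 1), B j) * D i)
      ((∑ j ∈ Finset.range (k + 1), B j) * C) := by
  obtain ⟨r, hr, hsum⟩ := exists_fin_sum_index (range (k + 1)) B
  refine h.multiCascadeComputable_pi r (fun i => Nat.lt_succ_iff.mp (mem_range.mp (hr i)))
    (fun j hj => ?_) (fun n hn => ?_) (by simp)
  · rw [hsum fun j' => if j' = j then _ else 0]
    simp [mul_comm, Nat.lt_succ_of_le hj]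
  · rw [hsum fun j => if j < n then C else A]
    cases n with
    | zero => simp [chainState, sum_mul]
    | succ n =>
      rw [sum_range_mul_ite_lt B A C (by omega), Ico_add_one_right_eq_Icc]
      exact hcond (n + 1) (by omega) hn

/-- The lower-bounding direction of the paper's Lemma 3: if for every
`i ∈ {1, …, k}` we have
`C·(B₀ + ⋯ + B_{i−1}) + A·(B_i + ⋯ + B_k) ≤ S·D_i` where
`S = B₀ + ⋯ + B_k`, then any `F` computable over the Y-network `Y(A, S, C)`
has its `S`-fold product computable over the `(k+1)`-relay cascade network
with all budgets scaled up by `S`. -/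
theorem Y_le_multiCascade {M₁ M₂ W : Type*} [Fintype M₁] [Nonempty M₁]
    [Fintype M₂] [Nonempty M₂] [Fintype W] [Nonempty W]
    (k : ℕ) (hk : 1 ≤ k) (A C : ℕ) (B D : ℕ → ℕ)
    (hA : 0 < A) (hC : 0 < C) (hB : ∀ j ≤ k, 0 < B j)
    (hD : ∀ i, 1 ≤ i → i ≤ k → 0 < D i)
    (hcond : ∀ i, 1 ≤ i → i ≤ k →
      C * (∑ j ∈ Finset.range i, B j) + A * (∑ j ∈ Finset.Icc i k, B j) ≤
        (∑ j ∈ Finset.range (k + 1), B j) * D i)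
    (F : M₁ × M₂ → W)
    (h : YComputable F A (∑ j ∈ Finset.range (k + 1), B j) C) :
    MultiCascadeComputable (prodFun F (∑ j ∈ Finset.range (k + 1), B j))
      k ((∑ j ∈ Finset.range (k + 1), B j) * A)
      (fun j => (∑ j ∈ Finset.range (k + 1), B j) * B j)
      (fun i => (∑ j ∈ Finset.range (k + 1), B j) * D i)
      ((∑ j ∈ Finset.range (k + 1), B j) * C) :=
  Y_le_multiCascade_general k A C B D hcond F h
end

section
/- Define h : (ZMod 2)³ → ZMod 2 by h(b₁, b₂, b₃) = b₁·b₂ + (1 + b₁)·(1 + b₂) + b₃, and for n ≥ 1 define the blockwise function H_n : ((ZMod 2)ⁿ) × ((ZMod 2 × ZMod 2)ⁿ) → (ZMod 2)ⁿ by H_n(b₁, (b₂, b₃))_i = h(b₁ᵢ, b₂ᵢ, b₃ᵢ). Then: (i) H_n is computable over the Y-network with bit budgets (n, 2n, n); but (ii) for every natural number D < n, H_n is NOT computable over the two-relay cascade network with bit budgets (n, n, n, D, n). -/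
/-- The scalar function `h(b₁, b₂, b₃) = b₁b₂ + (1 + b₁)(1 + b₂) + b₃`
over `GF(2)` (i.e. `b₁b₂ + b̄₁b̄₂ + b₃`). -/
def hFun (b₁ b₂ b₃ : ZMod 2) : ZMod 2 :=
  b₁ * b₂ + (1 + b₁) * (1 + b₂) + b₃

/-- The blockwise function `H_n` applying `h` in each of the `n` coordinates,
where source `x₁` holds the block of `b₁`'s and source `x₂` holds the block of
pairs `(b₂, b₃)`. -/
def Hn (n : ℕ) :
    (Fin n → ZMod 2) × (Fin n → ZMod 2 × ZMod 2) → (Fin n → ZMod 2) :=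
  fun p i => hFun (p.1 i) (p.2 i).1 (p.2 i).2

lemma card_M1 (n : ℕ) : Fintype.card (Fin n → ZMod 2) = 2 ^ n := by
  simp [Fintype.card_fun]

lemma card_M2 (n : ℕ) : Fintype.card (Fin n → ZMod 2 × ZMod 2) = 2 ^ (2 * n) := by
  simp [Fintype.card_fun, pow_mul]

lemma hFun_inj : ∀ a b c d : ZMod 2, hFun a c d = hFun b c d → a = b := by decide

/-- The paper's separating example: `H_n` is computable over the Y-network
`Y(n, 2n, n)`, but for every `D < n` it is not computable over the two-relay
cascade network with budgets `(n, n, n, D, n)` (i.e. Fig. 4 with unit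
capacities and `d < 1`), so `Y(1, 2, 1)` is a strict upper bounding model. -/
theorem Hn_Y_computable_not_cascade_computable (n : ℕ) (hn : 1 ≤ n) :
    YComputable (Hn n) n (2 * n) n ∧
      ∀ D : ℕ, D < n → ¬ CascadeComputable (Hn n) n n n D n := by
  constructor
  · obtain ⟨e₁⟩ := Fintype.truncEquivFinOfCardEq (card_M1 n)
    obtain ⟨e₂⟩ := Fintype.truncEquivFinOfCardEq (card_M2 n)
    obtain ⟨e₃⟩ := Fintype.truncEquivFinOfCardEq (card_M1 n)
    exact ⟨e₁, e₂, fun p => e₃ (Hn n (e₁.symm p.1, e₂.symm p.2)), e₃.symm,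
      fun m₁ m₂ => by simp⟩
  · rintro D hD ⟨ea, eb, eb', t, ψ, Dec, hspec⟩
    set m₂ : Fin n → ZMod 2 × ZMod 2 := fun _ => (0, 0)
    have hg : Function.Injective (fun m₁ => t (ea m₁, eb m₂)) := by
      intro a b hab
      have h1 : Hn n (a, m₂) = Hn n (b, m₂) := by
        rw [← hspec a m₂, ← hspec b m₂]
        simp only at hab
        rw [hab]
      funext i
      exact hFun_inj _ _ _ _ (congrFun h1 i)
    have := Fintype.card_le_of_injective _ hg
    rw [card_M1 n, Fintype.card_fin] at this
    exact absurd (Nat.pow_le_pow_iff_right (le_refl 2) |>.mp this) (Nat.not_le.mpr hD)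
end

section
/- Let S be a finite nonempty index set, n a positive natural number, R : S → ℝ with R s ≥ 0 for all s, and ε ≥ 0. For each s ∈ S let X_s be a finite nonempty set with |X_s| ≤ 2^{n·R s}. Let M₀ be a nonempty subset of ∏_{s∈S} X_s with |M₀| ≥ 2^{n·(Σ_{s∈S} R s − ε)}, and let U = (U_s)_{s∈S} be a random vector, defined on a probability space, whose distribution is uniform on M₀. Then for every subset A ⊆ S, the Shannon entropy of the marginal (U_s)_{s∈A} satisfies H[(U_s)_{s∈A}] ≥ n·(Σ_{s∈A} R s − ε)·log 2, where H denotes Shannon entropy with natural logarithm. (This is the key entropy estimate in the paper's proof of its Theorem: a uniform distribution on a large bin M₀ of message vectors yields a deterministic broadcast channel input whose marginal entropies dominate the rate point n(R − ε·1).) -/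
open MeasureTheory
open scoped Classical

/-- The Shannon entropy (with natural logarithm) of a random variable `U`
taking values in a finite type: `H[U] = −∑ₓ P(U = x) log P(U = x)`. -/
noncomputable def shannonEntropy {Ω α : Type*} [Fintype α] [MeasurableSpace Ω]
    (μ : Measure Ω) (U : Ω → α) : ℝ :=
  ∑ x : α, Real.negMulLog ((μ (U ⁻¹' {x})).toReal)

/-!
Restricting `U` to the coordinates in `A` merges at most `K = ∏_{s ∉ A} |X_s| ≤ 2^{n ∑_{s ∉ A} R_s}`
messages of `M₀` into each value, so every value of the marginal has probability at most
`K / |M₀|`. The Shannon entropy dominates the min-entropy `-log max_y P(y)`, hence it is at least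
`log |M₀| - log K ≥ n (∑_s R_s - ε) log 2 - n (∑_{s ∉ A} R_s) log 2`.
-/

open Finset

theorem mul_neg_log_le_negMulLog {p c : ℝ} (hp : 0 ≤ p) (hpc : p ≤ c) :
    p * -Real.log c ≤ Real.negMulLog p := by
  rcases hp.eq_or_lt with rfl | hp
  · simp
  rw [Real.negMulLog, neg_mul, mul_neg]
  exact neg_le_neg (mul_le_mul_of_nonneg_left (Real.log_le_log hp hpc) hp.le)

theorem prod_le_rpow_sum {ι : Type*} (B : Finset ι) {f g : ι → ℝ} {b : ℝ} (hb : 0 < b)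
    (hf₀ : ∀ i ∈ B, 0 ≤ f i) (hf : ∀ i ∈ B, f i ≤ b ^ g i) :
    ∏ i ∈ B, f i ≤ b ^ ∑ i ∈ B, g i := by
  rw [Real.rpow_sum_of_pos hb]
  exact prod_le_prod hf₀ hf

theorem card_filter_restrict_eq_le {S : Type*} [Fintype S] [DecidableEq S] {X : S → Type*}
    [∀ s, Fintype (X s)] (A : Finset S) (y : ∀ s : A, X s) :
    #{m : ∀ s, X s | A.restrict m = y} ≤ ∏ s ∈ Aᶜ, Fintype.card (X s) := by
  rw [← prod_coe_sort, ← Fintype.card_pi, ← card_univ]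
  refine card_le_card_of_injOn Aᶜ.restrict (fun _ _ ↦ mem_univ _) ?_
  intro m₁ hm₁ m₂ hm₂ hcompl
  simp only [coe_filter, mem_univ, true_and, Set.mem_ofPred_eq] at hm₁ hm₂
  funext s
  by_cases hs : s ∈ A
  · exact (congrFun hm₁ ⟨s, hs⟩).trans (congrFun hm₂ ⟨s, hs⟩).symm
  · exact congrFun hcompl ⟨s, mem_compl.mpr hs⟩

section Measure

variable {Ω α : Type*} [MeasurableSpace Ω] (μ : Measure Ω)

theorem measure_preimage_le_card_mul {U : Ω → α} {c : ENNReal} (hU : ∀ m, μ (U ⁻¹' {m}) ≤ c)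
    (T : Finset α) : μ (U ⁻¹' T) ≤ #T * c := by
  rw [← set_biUnion_preimage_singleton]
  calc μ (⋃ m ∈ T, U ⁻¹' {m}) ≤ ∑ m ∈ T, μ (U ⁻¹' {m}) := measure_biUnion_finset_le _ _
    _ ≤ ∑ _m ∈ T, c := sum_le_sum fun m _ ↦ hU m
    _ = #T * c := by rw [sum_const, nsmul_eq_mul]

theorem toReal_measure_preimage_le_card_div {U : Ω → α} {M : ℕ} (hM : M ≠ 0)
    (hU : ∀ m, μ (U ⁻¹' {m}) ≤ (M : ENNReal)⁻¹) (T : Finset α) :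
    (μ (U ⁻¹' T)).toReal ≤ #T / M := by
  have hfinite : (#T : ENNReal) * (M : ENNReal)⁻¹ ≠ ⊤ :=
    ENNReal.mul_ne_top (ENNReal.natCast_ne_top _) (ENNReal.inv_ne_top.mpr (by exact_mod_cast hM))
  calc (μ (U ⁻¹' T)).toReal ≤ ((#T : ENNReal) * (M : ENNReal)⁻¹).toReal :=
        ENNReal.toReal_mono hfinite (measure_preimage_le_card_mul μ hU T)
    _ = #T / M := by simp [div_eq_mul_inv]

variable [Fintype α] [IsProbabilityMeasure μ]

theorem one_le_sum_toReal_measure_preimage_singleton (V : Ω → α) :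
    1 ≤ ∑ y, (μ (V ⁻¹' {y})).toReal := by
  rw [← ENNReal.toReal_sum fun y _ ↦ measure_ne_top μ _]
  have hcover : (1 : ENNReal) ≤ ∑ y, μ (V ⁻¹' {y}) := by
    calc (1 : ENNReal) = μ (⋃ y, V ⁻¹' {y}) := by
          rw [← Set.preimage_iUnion, Set.iUnion_of_singleton, Set.preimage_univ, measure_univ]
      _ ≤ ∑ y, μ (V ⁻¹' {y}) := measure_iUnion_fintype_le μ _
  exact ENNReal.toReal_one ▸
    ENNReal.toReal_mono (ENNReal.sum_ne_top.mpr fun y _ ↦ measure_ne_top μ _) hcover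

theorem neg_log_le_shannonEntropy {V : Ω → α} {c : ℝ}
    (hc : ∀ y, (μ (V ⁻¹' {y})).toReal ≤ c) : -Real.log c ≤ shannonEntropy μ V := by
  have hH : 0 ≤ shannonEntropy μ V := sum_nonneg fun y _ ↦
    Real.negMulLog_nonneg ENNReal.toReal_nonneg measureReal_le_one
  rcases le_or_gt 0 (Real.log c) with hlog | hlog
  · linarith
  calc -Real.log c ≤ (∑ y, (μ (V ⁻¹' {y})).toReal) * -Real.log c :=
        le_mul_of_one_le_left (by linarith) (one_le_sum_toReal_measure_preimage_singleton μ V)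
    _ = ∑ y, (μ (V ⁻¹' {y})).toReal * -Real.log c := sum_mul ..
    _ ≤ shannonEntropy μ V :=
        sum_le_sum fun y _ ↦ mul_neg_log_le_negMulLog ENNReal.toReal_nonneg (hc y)

end Measure

theorem marginal_entropy_of_uniform_on_bin_general
    {S : Type*} [Fintype S] (n : ℕ)
    (R : S → ℝ) (ε : ℝ)
    (X : S → Type*) [∀ s, Fintype (X s)]
    (hX : ∀ s, (Fintype.card (X s) : ℝ) ≤ 2 ^ ((n : ℝ) * R s))
    (M₀ : Finset (∀ s, X s)) (hM₀ : M₀.Nonempty)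
    (hcard : (2 : ℝ) ^ ((n : ℝ) * ((∑ s, R s) - ε)) ≤ (M₀.card : ℝ))
    {Ω : Type*} [MeasurableSpace Ω] (μ : Measure Ω) [IsProbabilityMeasure μ]
    (U : Ω → ∀ s, X s)
    (hunif : ∀ m : ∀ s, X s,
      μ (U ⁻¹' {m}) = if m ∈ M₀ then ((M₀.card : ENNReal))⁻¹ else 0) :
    ∀ A : Finset S,
      (n : ℝ) * ((∑ s ∈ A, R s) - ε) * Real.log 2 ≤
        shannonEntropy μ (fun ω (s : A) => U ω s.1) := by
  intro A
  have hM : (0 : ℝ) < #M₀ := by exact_mod_cast hM₀.card_pos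
  have hpoint : ∀ m, μ (U ⁻¹' {m}) ≤ (#M₀ : ENNReal)⁻¹ := fun m ↦ by
    rw [hunif m]; split_ifs <;> simp
  have hfiber : ∀ y, (μ ((fun ω (s : A) => U ω s.1) ⁻¹' {y})).toReal ≤
      2 ^ (n * ∑ s ∈ Aᶜ, R s) / #M₀ := fun y ↦
    calc (μ ((fun ω (s : A) => U ω s.1) ⁻¹' {y})).toReal
        = (μ (U ⁻¹' ↑({m | A.restrict m = y} : Finset (∀ s, X s)))).toReal := by
          congr 2; ext ω; simp [funext_iff]
      _ ≤ #{m : ∀ s, X s | A.restrict m = y} / #M₀ :=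
          toReal_measure_preimage_le_card_div μ hM₀.card_pos.ne' hpoint _
      _ ≤ (∏ s ∈ Aᶜ, Fintype.card (X s) : ℕ) / #M₀ := by
          gcongr; exact card_filter_restrict_eq_le A y
      _ ≤ 2 ^ (n * ∑ s ∈ Aᶜ, R s) / #M₀ := by
          gcongr
          push_cast
          rw [mul_sum]
          exact prod_le_rpow_sum _ two_pos (fun _ _ ↦ by positivity) fun s _ ↦ hX s
  have hH := neg_log_le_shannonEntropy μ hfiber
  rw [Real.log_div (by positivity) hM.ne', Real.log_rpow two_pos] at hH
  have hlogM : n * (∑ s, R s - ε) * Real.log 2 ≤ Real.log #M₀ := by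
    simpa [Real.log_rpow two_pos] using Real.log_le_log (by positivity) hcard
  have hsplit := sum_add_sum_compl A R
  linear_combination hH + hlogM + (n * Real.log 2) * hsplit

/-- The key entropy estimate in the paper's proof of its Theorem: if `U` is
uniformly distributed on a set `M₀` of message vectors with
`|M₀| ≥ 2^{n(∑_s R_s − ε)}`, where the alphabet of source `s` has size at most
`2^{n R_s}`, then for every subset `A` of sources the marginal `(U_s)_{s∈A}`
satisfies `H[(U_s)_{s∈A}] ≥ n(∑_{s∈A} R_s − ε) log 2`. -/
theorem marginal_entropy_of_uniform_on_bin
    {S : Type*} [Fintype S] [Nonempty S] (n : ℕ) (hn : 0 < n)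
    (R : S → ℝ) (hR : ∀ s, 0 ≤ R s) (ε : ℝ) (hε : 0 ≤ ε)
    (X : S → Type*) [∀ s, Fintype (X s)] [∀ s, Nonempty (X s)]
    (hX : ∀ s, (Fintype.card (X s) : ℝ) ≤ 2 ^ ((n : ℝ) * R s))
    (M₀ : Finset (∀ s, X s)) (hM₀ : M₀.Nonempty)
    (hcard : (2 : ℝ) ^ ((n : ℝ) * ((∑ s, R s) - ε)) ≤ (M₀.card : ℝ))
    {Ω : Type*} [MeasurableSpace Ω] (μ : Measure Ω) [IsProbabilityMeasure μ]
    (U : Ω → ∀ s, X s)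
    (hunif : ∀ m : ∀ s, X s,
      μ (U ⁻¹' {m}) = if m ∈ M₀ then ((M₀.card : ENNReal))⁻¹ else 0) :
    ∀ A : Finset S,
      (n : ℝ) * ((∑ s ∈ A, R s) - ε) * Real.log 2 ≤
        shannonEntropy μ (fun ω (s : A) => U ω s.1) :=
  marginal_entropy_of_uniform_on_bin_general n R ε X hX M₀ hM₀ hcard μ U hunif
end
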